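/- arXiv:1812.01456 — 2 statements merged into one kernel-verified Lean document; each statement's English description precedes it below -/
import Mathlib

section
/- Let α ≠ β be complex numbers and n ≥ 1. Then every multiple root μ of the polynomial (λ-α)·((λ-α)^n - (λ-β)^n) cannot exist; that is, this polynomial of degree n+1 has only simple roots. -/
/-!
Put `a = μ - α` and `b = μ - β`, so `a ≠ b`. At a multiple root `μ` of `(X - α) q` with
`q = (X - α)^n - (X - β)^n`, the root `μ` is also a root of `q`, and of `q'` unless `μ = α`.
If `μ = α` then `q(μ) = -bⁿ = 0` forces `b = 0 = a`. Otherwise `aⁿ = bⁿ` and `aⁿ⁻¹ = bⁿ⁻¹`,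
and two consecutive equal powers force `a = b`.
-/

open Polynomial

theorem eq_of_pow_eq_of_pow_succ_eq {M : Type*} [MonoidWithZero M] [NoZeroDivisors M]
    [IsRightCancelMulZero M] {a b : M} {m : ℕ} (h : a ^ m = b ^ m)
    (h_succ : a ^ (m + 1) = b ^ (m + 1)) : a = b := by
  rcases eq_or_ne b 0 with rfl | hb
  · rw [zero_pow m.succ_ne_zero] at h_succ
    exact (pow_eq_zero_iff m.succ_ne_zero).mp h_succ
  · rw [pow_succ', pow_succ', h] at h_succ
    exact mul_right_cancel₀ (pow_ne_zero m hb) h_succ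

section MultipleRoot

variable {R : Type*} [CommRing R]

theorem isRoot_of_isRoot_X_sub_C_mul_of_isRoot_derivative [NoZeroDivisors R] {a μ : R}
    {q : R[X]} (h : ((X - C a) * q).IsRoot μ) (h' : (derivative ((X - C a) * q)).IsRoot μ) :
    q.IsRoot μ ∧ (μ ≠ a → (derivative q).IsRoot μ) := by
  simp only [IsRoot, derivative_mul, derivative_X_sub_C, one_mul, eval_add, eval_mul, eval_sub,
    eval_X, eval_C] at h h'
  rcases eq_or_ne μ a with rfl | hμ
  · simpa using h'
  · have hq : q.eval μ = 0 := (mul_eq_zero.mp h).resolve_left (sub_ne_zero.mpr hμ)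
    rw [hq, zero_add] at h'
    exact ⟨hq, fun _ ↦ (mul_eq_zero.mp h').resolve_left (sub_ne_zero.mpr hμ)⟩

theorem isRoot_X_sub_C_pow_sub_X_sub_C_pow_iff {α β μ : R} {n : ℕ} :
    ((X - C α) ^ n - (X - C β) ^ n).IsRoot μ ↔ (μ - α) ^ n = (μ - β) ^ n := by
  simp [IsRoot, sub_eq_zero]

theorem isRoot_derivative_X_sub_C_pow_sub_X_sub_C_pow_iff [NoZeroDivisors R] [CharZero R]
    {α β μ : R} {m : ℕ} :
    (derivative ((X - C α) ^ (m + 1) - (X - C β) ^ (m + 1))).IsRoot μ ↔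
      (μ - α) ^ m = (μ - β) ^ m := by
  simp [IsRoot, derivative_X_sub_C_pow, ← mul_sub, sub_eq_zero, Nat.cast_add_one_ne_zero]

end MultipleRoot

theorem stmt_2 (n : ℕ) (hn : 1 ≤ n) (α β : ℂ) (hab : α ≠ β) (μ : ℂ) :
    ¬ (((X - C α) * ((X - C α) ^ n - (X - C β) ^ n) : Polynomial ℂ).IsRoot μ ∧
        (derivative ((X - C α) * ((X - C α) ^ n - (X - C β) ^ n) : Polynomial ℂ)).IsRoot μ) := by
  rintro ⟨h, h'⟩
  obtain ⟨m, rfl⟩ := Nat.exists_eq_add_of_le' hn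
  obtain ⟨hq, hq'⟩ := isRoot_of_isRoot_X_sub_C_mul_of_isRoot_derivative h h'
  rw [isRoot_X_sub_C_pow_sub_X_sub_C_pow_iff] at hq
  suffices μ - α = μ - β from hab (sub_right_injective this)
  rcases eq_or_ne μ α with rfl | hμ
  · rw [sub_self, zero_pow m.succ_ne_zero, eq_comm, pow_eq_zero_iff m.succ_ne_zero] at hq
    rw [hq, sub_self]
  · exact eq_of_pow_eq_of_pow_succ_eq
      (isRoot_derivative_X_sub_C_pow_sub_X_sub_C_pow_iff.mp (hq' hμ)) hq
end

section
/- Let N be an n×n complex matrix with N* = -N (adjoint with respect to the signature-(p,q) form defined by s = diag(-I_p, I_q), i.e., N* = s N̄ᵗ s), N² = 0, and rank N = 2. Then there exist matrices N₁, N₂ with Nᵢ* = -Nᵢ, Nᵢ² = 0, rank Nᵢ = 1, N₁N₂ = N₂N₁ = 0, and N = N₁ + N₂. -/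
open Matrix

/-- The matrix `s = diag(-I_p, I_q)` defining the signature-`(p,q)` Hermitian form on `ℂⁿ`. -/
noncomputable def sig (p n : ℕ) : Matrix (Fin n) (Fin n) ℂ :=
  Matrix.diagonal fun i => if (i : ℕ) < p then -1 else 1

/-- The Hermitian form `⟨v,w⟩ = -∑_{i<p} v̄ᵢwᵢ + ∑_{i≥p} v̄ᵢwᵢ = v̄ᵗ s w`. -/
noncomputable def pqform (p n : ℕ) (v w : Fin n → ℂ) : ℂ :=
  star v ⬝ᵥ (sig p n *ᵥ w)

/-- The adjoint `A* = s Āᵗ s` with respect to the signature-`(p,q)` form. -/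
noncomputable def pqadj (p n : ℕ) (A : Matrix (Fin n) (Fin n) ℂ) : Matrix (Fin n) (Fin n) ℂ :=
  sig p n * Aᴴ * sig p n

/-!
Write `N = s M` with `M = s N`. The condition `N* = -N` says that `M` is skew-Hermitian, so
`M = U diag(d) U*` with `U` unitary and `d` purely imaginary. Since `s` is invertible, `N² = 0`
amounts to `D V D = 0` for the Gram matrix `V = U* s U` of the eigenbasis: the eigenvectors with
nonzero eigenvalue are pairwise `s`-orthogonal and `s`-isotropic. Hence all the matrices
`s U diag(e) U*` with `supp e ⊆ supp d` are skew-adjoint (for `e` imaginary) and multiply to zero,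
and `rank N = #supp d = 2` splits `d` into two single-entry pieces.
-/

section Diagonal

variable {ι : Type*} [DecidableEq ι]

theorem Matrix.diagonal_mul_mul_diagonal_eq_zero_of_support_subset [Fintype ι] {R : Type*}
    [Semiring R] [NoZeroDivisors R] {d e f : ι → R} {V : Matrix ι ι R}
    (h : diagonal d * V * diagonal d = 0)
    (he : Function.support e ⊆ Function.support d)
    (hf : Function.support f ⊆ Function.support d) :
    diagonal e * V * diagonal f = 0 := by
  ext i j
  have hij := congrFun₂ h i j
  simp only [mul_diagonal, diagonal_mul, zero_apply] at hij ⊢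
  by_cases hei : e i = 0
  · simp [hei]
  by_cases hfj : f j = 0
  · simp [hfj]
  have hdi : d i ≠ 0 := he hei
  have hdj : d j ≠ 0 := hf hfj
  simp [hdi, hdj] at hij
  simp [hij]

theorem Pi.support_single_apply_subset {M : Type*} [Zero M] (d : ι → M) (z : ι) :
    Function.support (Pi.single z (d z)) ⊆ Function.support d := by
  intro i hi
  obtain rfl := Pi.support_single_subset hi
  simpa using hi

theorem Fintype.card_single_ne_zero [Fintype ι] {M : Type*} [Zero M] [DecidableEq M] {z : ι}
    {c : M} (hc : c ≠ 0) : Fintype.card {i // (Pi.single z c : ι → M) i ≠ 0} = 1 := by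
  rw [Fintype.card_eq_one_iff]
  refine ⟨⟨z, by simpa using hc⟩, fun ⟨i, hi⟩ => Subtype.ext ?_⟩
  by_contra hiz
  simp [hiz] at hi

theorem Function.exists_eq_single_add_single_of_card_eq_two [Fintype ι] {M : Type*}
    [AddMonoid M] [DecidableEq M] {d : ι → M} (h : Fintype.card {i // d i ≠ 0} = 2) :
    ∃ x y, x ≠ y ∧ d x ≠ 0 ∧ d y ≠ 0 ∧ d = Pi.single x (d x) + Pi.single y (d y) := by
  rw [← Nat.card_eq_fintype_card, Nat.card_eq_two_iff] at h
  obtain ⟨⟨x, hx⟩, ⟨y, hy⟩, hxy, hcover⟩ := h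
  have hxy' : x ≠ y := fun h => hxy (Subtype.ext h)
  refine ⟨x, y, hxy', hx, hy, funext fun i => ?_⟩
  by_cases hi : d i = 0
  · have hix : i ≠ x := by rintro rfl; exact hx hi
    have hiy : i ≠ y := by rintro rfl; exact hy hi
    simp [hix, hiy, hi]
  · have hmem : (⟨i, hi⟩ : {i // d i ≠ 0}) ∈ ({⟨x, hx⟩, ⟨y, hy⟩} : Set _) := hcover ▸ trivial
    rcases hmem with h | h <;> cases h
    · simp [hxy']
    · simp [hxy'.symm]

end Diagonal

section UnitaryConj

variable {ι : Type*} [Fintype ι] [DecidableEq ι]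

theorem Matrix.exists_unitary_diagonal_of_conjTranspose_eq_neg {M : Matrix ι ι ℂ}
    (hM : Mᴴ = -M) :
    ∃ U ∈ unitaryGroup ι ℂ, ∃ d : ι → ℂ, star d = -d ∧ M = U * diagonal d * star U := by
  have hH : (Complex.I • M).IsHermitian := by
    simp [IsHermitian, conjTranspose_smul, hM]
  refine ⟨hH.eigenvectorUnitary, hH.eigenvectorUnitary.2,
    fun i => -Complex.I * hH.eigenvalues i, funext fun i => by simp, ?_⟩
  have hspec := hH.spectral_theorem
  rw [Unitary.conjStarAlgAut_apply] at hspec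
  calc M = (-Complex.I) • (Complex.I • M) := by rw [smul_smul]; simp
    _ = (-Complex.I) • ((hH.eigenvectorUnitary : Matrix ι ι ℂ) *
          diagonal (RCLike.ofReal ∘ hH.eigenvalues) *
          star (hH.eigenvectorUnitary : Matrix ι ι ℂ)) :=
      congrArg _ hspec
    _ = _ := by
      rw [← smul_mul_assoc, ← mul_smul_comm, ← diagonal_smul]
      rfl

theorem Matrix.conjTranspose_mul_diagonal_mul_star {R : Type*} [CommSemiring R] [StarRing R]
    (U : Matrix ι ι R) (e : ι → R) :
    (U * diagonal e * star U)ᴴ = U * diagonal (star e) * star U := by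
  simp [conjTranspose_mul, Matrix.mul_assoc, star_eq_conjTranspose]

theorem Matrix.rank_mul_mul_diagonal_mul_star {K : Type*} [Field K] [StarRing K] [DecidableEq K]
    {s U : Matrix ι ι K} (hs : IsUnit s) (hU : U ∈ unitaryGroup ι K) (e : ι → K) :
    (s * (U * diagonal e * star U)).rank = Fintype.card {i // e i ≠ 0} := by
  have hU' : IsUnit U := Unitary.isUnit_coe (U := ⟨U, hU⟩)
  have hUs : IsUnit (star U) := Unitary.isUnit_coe (U := star ⟨U, hU⟩)
  rw [isUnit_iff_isUnit_det] at hs hU' hUs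
  rw [rank_mul_eq_right_of_isUnit_det _ _ hs, rank_mul_eq_left_of_isUnit_det _ _ hUs,
    rank_mul_eq_right_of_isUnit_det _ _ hU', rank_diagonal]

theorem Matrix.mul_mul_diagonal_mul_star_mul_eq_zero {R : Type*} [CommRing R] [StarRing R]
    [NoZeroDivisors R] {s U : Matrix ι ι R} (hs : IsUnit s) (hU : U ∈ unitaryGroup ι R)
    {d e f : ι → R}
    (hd : s * (U * diagonal d * star U) * (s * (U * diagonal d * star U)) = 0)
    (he : Function.support e ⊆ Function.support d)
    (hf : Function.support f ⊆ Function.support d) :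
    s * (U * diagonal e * star U) * (s * (U * diagonal f * star U)) = 0 := by
  have hU' : IsUnit U := Unitary.isUnit_coe (U := ⟨U, hU⟩)
  have hUs : IsUnit (star U) := Unitary.isUnit_coe (U := star ⟨U, hU⟩)
  have factor : ∀ a b : ι → R, s * (U * diagonal a * star U) * (s * (U * diagonal b * star U)) =
      s * U * (diagonal a * (star U * s * U) * diagonal b) * star U := by
    intro a b; simp only [Matrix.mul_assoc]
  rw [factor, hUs.mul_left_eq_zero, (hs.mul hU').mul_right_eq_zero] at hd ⊢
  exact diagonal_mul_mul_diagonal_eq_zero_of_support_subset hd he hf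

end UnitaryConj

section Signature

variable {p n : ℕ}

theorem sig_mul_sig (p n : ℕ) : sig p n * sig p n = 1 := by
  rw [sig, diagonal_mul_diagonal, ← diagonal_one]
  congr 1
  funext i
  split_ifs <;> norm_num

theorem sig_mul_sig_mul (A : Matrix (Fin n) (Fin n) ℂ) : sig p n * (sig p n * A) = A := by
  rw [← Matrix.mul_assoc, sig_mul_sig, Matrix.one_mul]

theorem isUnit_sig (p n : ℕ) : IsUnit (sig p n) :=
  ⟨⟨_, _, sig_mul_sig p n, sig_mul_sig p n⟩, rfl⟩

theorem sig_conjTranspose (p n : ℕ) : (sig p n)ᴴ = sig p n := by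
  rw [sig, diagonal_conjTranspose]
  congr 1
  funext i
  simp only [Pi.star_apply]
  split_ifs <;> simp

theorem pqadj_sig_mul_eq_neg_iff {A : Matrix (Fin n) (Fin n) ℂ} :
    pqadj p n (sig p n * A) = -(sig p n * A) ↔ Aᴴ = -A := by
  rw [pqadj, conjTranspose_mul, sig_conjTranspose, Matrix.mul_assoc, Matrix.mul_assoc,
    sig_mul_sig, Matrix.mul_one, ← Matrix.mul_neg]
  exact (isUnit_sig p n).mul_right_injective.eq_iff

end Signature

theorem stmt_7_general (p n : ℕ) (N : Matrix (Fin n) (Fin n) ℂ)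
    (hadj : pqadj p n N = -N) (hnil : N * N = 0) (hrk : N.rank = 2) :
    ∃ N₁ N₂ : Matrix (Fin n) (Fin n) ℂ,
      pqadj p n N₁ = -N₁ ∧ pqadj p n N₂ = -N₂ ∧
      N₁ * N₁ = 0 ∧ N₂ * N₂ = 0 ∧
      N₁.rank = 1 ∧ N₂.rank = 1 ∧
      N₁ * N₂ = 0 ∧ N₂ * N₁ = 0 ∧
      N = N₁ + N₂ := by
  obtain ⟨U, hU, d, hd, hM⟩ := exists_unitary_diagonal_of_conjTranspose_eq_neg <|
    pqadj_sig_mul_eq_neg_iff.1 (by rwa [sig_mul_sig_mul] : pqadj p n (sig p n * (sig p n * N)) = _)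
  obtain rfl : N = sig p n * (U * diagonal d * star U) := by rw [← hM, sig_mul_sig_mul]
  rw [rank_mul_mul_diagonal_mul_star (isUnit_sig p n) hU] at hrk
  obtain ⟨x, y, hxy, hx, hy, hsplit⟩ :=
    Function.exists_eq_single_add_single_of_card_eq_two hrk
  have skew (z : Fin n) : pqadj p n (sig p n * (U * diagonal (Pi.single z (d z)) * star U)) =
      -(sig p n * (U * diagonal (Pi.single z (d z)) * star U)) := by
    rw [pqadj_sig_mul_eq_neg_iff, conjTranspose_mul_diagonal_mul_star, ← Matrix.neg_mul,
      ← Matrix.mul_neg, diagonal_neg, Pi.star_single, ← Pi.star_apply, hd, Pi.neg_apply,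
      Pi.single_neg]
    rfl
  have orth (z w : Fin n) : sig p n * (U * diagonal (Pi.single z (d z)) * star U) *
      (sig p n * (U * diagonal (Pi.single w (d w)) * star U)) = 0 :=
    mul_mul_diagonal_mul_star_mul_eq_zero (isUnit_sig p n) hU hnil
      (Pi.support_single_apply_subset d z) (Pi.support_single_apply_subset d w)
  have rank_one {z : Fin n} (hz : d z ≠ 0) :
      (sig p n * (U * diagonal (Pi.single z (d z)) * star U)).rank = 1 := by
    rw [rank_mul_mul_diagonal_mul_star (isUnit_sig p n) hU, Fintype.card_single_ne_zero hz]
  refine ⟨_, _, skew x, skew y, orth x x, orth y y, rank_one hx, rank_one hy, orth x y, orth y x,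
    ?_⟩
  conv_lhs => rw [hsplit]
  rw [← Matrix.mul_add, ← Matrix.add_mul, ← Matrix.mul_add, diagonal_add]
  rfl

theorem stmt_7 (p q n : ℕ) (hn : n = p + q) (N : Matrix (Fin n) (Fin n) ℂ)
    (hadj : pqadj p n N = -N) (hnil : N * N = 0) (hrk : N.rank = 2) :
    ∃ N₁ N₂ : Matrix (Fin n) (Fin n) ℂ,
      pqadj p n N₁ = -N₁ ∧ pqadj p n N₂ = -N₂ ∧
      N₁ * N₁ = 0 ∧ N₂ * N₂ = 0 ∧
      N₁.rank = 1 ∧ N₂.rank = 1 ∧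
      N₁ * N₂ = 0 ∧ N₂ * N₁ = 0 ∧
      N = N₁ + N₂ :=
  stmt_7_general p n N hadj hnil hrk
end
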